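/- arXiv:1607.04025 — 2 statements merged into one kernel-verified Lean document; each statement's English description precedes it below -/
import Mathlib

section
/- For every n ≥ 2, the Černý automaton C_n (with states Z_n, letter a mapping i ↦ i+1 mod n, and letter b mapping 0 ↦ 1 and fixing all other states) is synchronizing and its shortest reset word has length exactly (n-1)². -/
/-- Action of a word on a state. -/
def actW {Q A : Type*} (δ : Q → A → Q) (q : Q) (w : List A) : Q := w.foldl δ q

/-- Image of the full state set under a word. -/
def img {Q A : Type*} [Fintype Q] [DecidableEq Q] (δ : Q → A → Q) (w : List A) : Finset Q :=
  Finset.univ.image (fun q => actW δ q w)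

/-- The Černý automaton on ZMod n: letter `false` = a (cyclic shift),
letter `true` = b (maps 0 to 1, fixes the rest). -/
def cerny (n : ℕ) [NeZero n] : ZMod n → Bool → ZMod n := fun i x =>
  if x then (if i = 0 then 1 else i) else i + 1

/-!
For a set `S` of states and `r : ℕ` let `h` be the largest representative in `{0, …, n-1}` of
`S + r`. If a word `w` maps `S`, with `|S| ≥ 2`, to a single state, then
`|w| ≥ r + 1 + n (h - 1)` for some `r`, by induction on `w`: a witness `r` for `S·a = S + 1`
gives the witness `r + 1` for `S`; the letter `b` merges only `0` and `1`, so passing from `S`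
to `S·b` does not lower `h`, except when `r ≡ -1`, where it may lower `h` by one, and then
`r + 1 - n` is a witness for `S`, trading `n` units of rotation for that unit of `h`.
For the full state set `h = n - 1` for every `r`, which gives `(n - 1)²`; the word
`b (aⁿ⁻¹ b)ⁿ⁻²` attains it.
-/

open Finset

lemma actW_cons {Q A : Type*} (δ : Q → A → Q) (q : Q) (c : A) (w : List A) :
    actW δ q (c :: w) = actW δ (δ q c) w := rfl

lemma actW_append {Q A : Type*} (δ : Q → A → Q) (q : Q) (u v : List A) :
    actW δ q (u ++ v) = actW δ (actW δ q u) v :=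
  List.foldl_append

namespace Cerny

variable {n : ℕ} [NeZero n]

lemma cerny_false (i : ZMod n) : cerny n i false = i + 1 := rfl

lemma cerny_true_zero : cerny n 0 true = 1 := by simp [cerny]

lemma cerny_true_of_ne_zero {i : ZMod n} (hi : i ≠ 0) : cerny n i true = i := by
  simp [cerny, hi]

section

variable [Fact (1 < n)]

lemma cerny_true_ne_zero (i : ZMod n) : cerny n i true ≠ 0 := by
  by_cases hi : i = 0
  · simp [hi, cerny_true_zero]
  · rwa [cerny_true_of_ne_zero hi]

lemma val_sub_one_of_ne_zero {x : ZMod n} (hx : x ≠ 0) : (x - 1).val = x.val - 1 := by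
  rw [ZMod.val_sub (by rw [ZMod.val_one]; exact ZMod.val_pos.mpr hx), ZMod.val_one]

lemma val_le_val_add_one {x : ZMod n} (hx : x + 1 ≠ 0) : x.val ≤ (x + 1).val := by
  have hadd := ZMod.val_add x 1
  rw [ZMod.val_one] at hadd
  rcases Nat.lt_or_ge (x.val + 1) n with hlt | hge
  · rw [hadd, Nat.mod_eq_of_lt hlt]
    exact Nat.le_succ _
  · rw [le_antisymm (ZMod.val_lt x) hge, Nat.mod_self, ZMod.val_eq_zero] at hadd
    exact absurd hadd hx

lemma val_cerny_true_le (y : ZMod n) : (cerny n y true).val ≤ max y.val 1 := by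
  by_cases hy : y = 0
  · simp [hy, cerny_true_zero, ZMod.val_one]
  · simp [cerny_true_of_ne_zero hy]

end

lemma actW_replicate_false (k : ℕ) (q : ZMod n) :
    actW (cerny n) q (List.replicate k false) = q + k := by
  induction k generalizing q with
  | zero => simp [actW]
  | succ k ih =>
    rw [List.replicate_succ, actW_cons, ih, cerny_false]
    push_cast
    ring

def block (n : ℕ) : List Bool := List.replicate (n - 1) false ++ [true]

lemma actW_block (q : ZMod n) : actW (cerny n) q (block n) = cerny n (q - 1) true := by
  rw [block, actW_append, actW_replicate_false, Nat.cast_pred (Nat.pos_of_neZero n),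
    ZMod.natCast_self, zero_sub, ← sub_eq_add_neg]
  rfl

def resetWord (n : ℕ) : List Bool := true :: (List.replicate (n - 2) (block n)).flatten

lemma resetWord_length (hn : 2 ≤ n) : (resetWord n).length = (n - 1) ^ 2 := by
  obtain ⟨k, rfl⟩ := Nat.exists_eq_add_of_le' hn
  simp [resetWord, block, List.sum_replicate]
  ring

section

variable [Fact (1 < n)]

lemma actW_replicate_block (k : ℕ) {x : ZMod n} (hx : x ≠ 0) (hxk : x.val ≤ k + 1) :
    actW (cerny n) x (List.replicate k (block n)).flatten = 1 := by
  induction k generalizing x with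
  | zero =>
    have hx1 : x.val = 1 := le_antisymm hxk (ZMod.val_pos.mpr hx)
    rw [← ZMod.val_one n] at hx1
    simp [actW, ZMod.val_injective n hx1]
  | succ k ih =>
    rw [List.replicate_succ, List.flatten_cons, actW_append, actW_block]
    refine ih (cerny_true_ne_zero _) ((val_cerny_true_le _).trans ?_)
    rw [val_sub_one_of_ne_zero hx]
    omega

lemma actW_resetWord (q : ZMod n) : actW (cerny n) q (resetWord n) = 1 :=
  actW_replicate_block _ (cerny_true_ne_zero q) (by have := ZMod.val_lt (cerny n q true); omega)

lemma img_resetWord : img (cerny n) (resetWord n) = {1} := by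
  simp only [img, actW_resetWord]
  exact image_const univ_nonempty 1

end

def rotHeight (S : Finset (ZMod n)) (r : ℕ) : ℕ := S.sup fun x => (x + r).val

def potential (S : Finset (ZMod n)) (r : ℕ) : ℤ := r + 1 + n * ((rotHeight S r : ℤ) - 1)

lemma potential_succ (S : Finset (ZMod n)) (r : ℕ) :
    potential S (r + 1) = potential (S.image (cerny n · false)) r + 1 := by
  have hheight : rotHeight S (r + 1) = rotHeight (S.image (cerny n · false)) r := by
    simp only [rotHeight, sup_image]
    refine sup_congr rfl fun x _ => ?_
    simp only [Function.comp, cerny_false]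
    push_cast
    ring_nf
  simp only [potential, hheight]
  push_cast
  ring

lemma card_image_cerny_false (S : Finset (ZMod n)) : #(S.image (cerny n · false)) = #S :=
  card_image_of_injective S (add_left_injective 1)

section

variable [Fact (1 < n)]

lemma rotHeight_le_rotHeight_image_true (S : Finset (ZMod n)) {r : ℕ}
    (hr : (r : ZMod n) + 1 ≠ 0) : rotHeight S r ≤ rotHeight (S.image (cerny n · true)) r := by
  refine Finset.sup_le fun x hx => ?_
  have hle := le_sup (f := fun y : ZMod n => (y + r).val) (mem_image_of_mem (cerny n · true) hx)
  by_cases hx0 : x = 0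
  · subst hx0
    simp only [cerny_true_zero, zero_add] at hle ⊢
    exact (val_le_val_add_one hr).trans (by rwa [add_comm])
  · rwa [cerny_true_of_ne_zero hx0] at hle

lemma sup_val_le_rotHeight_image_true (S : Finset (ZMod n))
    (hne : (S.image (cerny n · true)).Nonempty) {r : ℕ} (hr : (r : ZMod n) + 1 = 0) :
    S.sup ZMod.val ≤ rotHeight (S.image (cerny n · true)) r + 1 := by
  set T := S.image (cerny n · true)
  obtain ⟨y, hyT, hy⟩ := exists_mem_eq_sup T hne ZMod.val
  have hy0 : y ≠ 0 := by
    obtain ⟨x, -, rfl⟩ := mem_image.mp hyT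
    exact cerny_true_ne_zero x
  have hyr : y + r = y - 1 := by rw [eq_neg_of_add_eq_zero_left hr, sub_eq_add_neg]
  have hyle := le_sup (f := fun z : ZMod n => (z + r).val) hyT
  simp only [hyr, val_sub_one_of_ne_zero hy0] at hyle
  refine Finset.sup_le fun x hx => ?_
  by_cases hx0 : x = 0
  · simp [hx0]
  · have hxle := le_sup (f := ZMod.val) (mem_image_of_mem (cerny n · true) hx)
    rw [cerny_true_of_ne_zero hx0, hy] at hxle
    change y.val - 1 ≤ rotHeight T r at hyle
    omega

lemma exists_potential_le_potential_image_true (S : Finset (ZMod n))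
    (hne : (S.image (cerny n · true)).Nonempty) (r : ℕ) :
    ∃ r', potential S r' ≤ potential (S.image (cerny n · true)) r + 1 := by
  by_cases hr : (r : ZMod n) + 1 = 0
  · have hn : n ≤ r + 1 := Nat.le_of_dvd r.succ_pos <| (ZMod.natCast_eq_zero_iff _ _).mp <| by
      push_cast; exact hr
    have hr' : ((r + 1 - n : ℕ) : ZMod n) = 0 := by
      rw [Nat.cast_sub hn, ZMod.natCast_self, sub_zero]
      push_cast
      exact hr
    have hheight : rotHeight S (r + 1 - n) = S.sup ZMod.val := by simp [rotHeight, hr']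
    have hle : (n : ℤ) * S.sup ZMod.val ≤
        n * (rotHeight (S.image (cerny n · true)) r + 1) :=
      mod_cast Nat.mul_le_mul_left n (sup_val_le_rotHeight_image_true S hne hr)
    refine ⟨r + 1 - n, ?_⟩
    simp only [potential, hheight]
    push_cast [hn]
    linarith
  · refine ⟨r, ?_⟩
    have := rotHeight_le_rotHeight_image_true S hr
    simp only [potential]
    nlinarith

lemma potential_zero_le_one (S : Finset (ZMod n)) (hS : 2 ≤ #S)
    (hT : #(S.image (cerny n · true)) ≤ 1) : potential S 0 ≤ 1 := by
  have hval : ∀ x ∈ S, x.val ≤ 1 := by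
    intro x hx
    by_cases hx0 : x = 0
    · simp [hx0]
    obtain ⟨y, hy, hyx⟩ := exists_mem_ne hS x
    have hxy := card_le_one.mp hT _ (mem_image_of_mem _ hx) _ (mem_image_of_mem _ hy)
    rw [cerny_true_of_ne_zero hx0] at hxy
    by_cases hy0 : y = 0
    · rw [hy0, cerny_true_zero] at hxy
      rw [hxy, ZMod.val_one]
    · exact absurd (hxy.trans (cerny_true_of_ne_zero hy0)).symm hyx
  have hheight : rotHeight S 0 ≤ 1 :=
    Finset.sup_le fun x hx => by simpa using hval x hx
  have : (rotHeight S 0 : ℤ) ≤ 1 := by exact_mod_cast hheight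
  simp only [potential, Nat.cast_zero, zero_add]
  nlinarith [Int.natCast_nonneg n]

lemma exists_potential_le_potential_image (c : Bool) (S : Finset (ZMod n))
    (hne : (S.image (cerny n · c)).Nonempty) (r : ℕ) :
    ∃ r', potential S r' ≤ potential (S.image (cerny n · c)) r + 1 := by
  cases c with
  | false => exact ⟨r + 1, (potential_succ S r).le⟩
  | true => exact exists_potential_le_potential_image_true S hne r

lemma exists_potential_le_length (w : List Bool) (S : Finset (ZMod n)) (hS : 2 ≤ #S)
    (hw : #(S.image (actW (cerny n) · w)) ≤ 1) : ∃ r, potential S r ≤ w.length := by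
  induction w generalizing S with
  | nil => simp [actW] at hw; omega
  | cons c w ih =>
    set T := S.image (cerny n · c)
    have hwT : #(T.image (actW (cerny n) · w)) ≤ 1 := by
      rwa [image_image]
    rcases le_or_gt #T 1 with hT | hT
    · cases c with
      | false => exact absurd (card_image_cerny_false S ▸ hT) (by omega)
      | true => exact ⟨0, (potential_zero_le_one S hS hT).trans (by simp)⟩
    · obtain ⟨r, hr⟩ := ih T hT hwT
      obtain ⟨r', hr'⟩ :=
        exists_potential_le_potential_image c S (card_pos.mp (show 0 < #T by omega)) r
      change potential S r' ≤ potential T r + 1 at hr'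
      exact ⟨r', by rw [List.length_cons]; push_cast; linarith⟩

end

lemma sq_pred_le_potential_univ (r : ℕ) :
    ((n : ℤ) - 1) ^ 2 ≤ potential (univ : Finset (ZMod n)) r := by
  have hpos := Nat.pos_of_neZero n
  have hheight : n - 1 ≤ rotHeight (univ : Finset (ZMod n)) r := by
    have := le_sup (f := fun x : ZMod n => (x + r).val) (mem_univ (((n - 1 : ℕ) : ZMod n) - r))
    rwa [sub_add_cancel, ZMod.val_cast_of_lt (Nat.sub_lt hpos one_pos)] at this
  have : (n : ℤ) * (n - 2) ≤ n * ((rotHeight (univ : Finset (ZMod n)) r : ℤ) - 1) :=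
    mul_le_mul_of_nonneg_left (by omega) (Int.natCast_nonneg n)
  simp only [potential]
  nlinarith

end Cerny

/-- The Černý automaton is synchronizing and its shortest reset word has
length exactly (n-1)^2. -/
theorem cerny_reset_length (n : ℕ) [NeZero n] (hn : 2 ≤ n) :
    (∃ w : List Bool, (img (cerny n) w).card = 1 ∧ w.length = (n - 1) ^ 2) ∧
    (∀ w : List Bool, (img (cerny n) w).card = 1 → (n - 1) ^ 2 ≤ w.length) := by
  have : Fact (1 < n) := ⟨hn⟩
  refine ⟨⟨Cerny.resetWord n, by rw [Cerny.img_resetWord, card_singleton],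
    Cerny.resetWord_length hn⟩, fun w hw => ?_⟩
  have hcard : 2 ≤ #(univ : Finset (ZMod n)) := by rwa [card_univ, ZMod.card]
  obtain ⟨r, hr⟩ := Cerny.exists_potential_le_length w univ hcard hw.le
  have := Cerny.sq_pred_le_potential_univ (n := n) r
  zify [(by omega : 1 ≤ n)]
  linarith
end

section
/- For the greedy compressing algorithm on a synchronizing DFA: at every step with current subset S of size ≥ 2, there exists a word w of length at most C(n−|S|+2, 2) with |Sw| < |S|; consequently the greedy algorithm terminates with a reset word of length at most the sum over m = 2..n of C(n−m+2, 2) = (n³−n)/6. -/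
/-!
A shortest word `w` compressing an `m`-set `S` passes through the `m`-sets `S·w[:i]`, each
containing a pair merged by `w[i:]`; by minimality that pair is not contained in any earlier
`S·w[:j]`, or cutting out `w[j:i]` would leave a shorter compressing word. The complements of the
`S·w[:i]` and these pairs thus form a skew Bollobás system with sets of size `n - m`, and Frankl's
bound gives `|w| ≤ C(n-m+2, 2)`. Greedy compression costs at most the sum of these bounds over
`m = 2, …, n`, which is `C(n+1, 3) = (n³-n)/6`.
-/

open Finset Polynomial

theorem linearIndependent_of_triangular {ι R V : Type*} [Fintype ι] [LinearOrder ι]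
    [CommRing R] [IsDomain R] [AddCommGroup V] [Module R V] (v : ι → V) (φ : ι → V →ₗ[R] R)
    (h_lt : ∀ i j, j < i → φ i (v j) = 0) (h_diag : ∀ i, φ i (v i) ≠ 0) :
    LinearIndependent R v := by
  let M : Matrix ι ι R := fun i j => φ i (v j)
  have hM : M.det ≠ 0 := by
    rw [Matrix.det_of_isUpperTriangular fun i j hji => h_lt i j hji]
    exact prod_ne_zero_iff.mpr fun i _ => h_diag i
  exact LinearIndependent.of_comp (LinearMap.pi φ) (Matrix.linearIndependent_cols_of_det_ne_zero hM)

section Sym2Forms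

variable {R : Type*} [CommRing R] (d : ℕ)

def sym2Coeffs (P : R[X]) : Sym2 (Fin d) → R :=
  Sym2.lift ⟨fun r s => P.coeff r * P.coeff s, fun _ _ => mul_comm _ _⟩

def sym2Eval (a b : R) : (Sym2 (Fin d) → R) →ₗ[R] R :=
  ∑ r : Fin d, ∑ s : Fin d, (a ^ (r : ℕ) * b ^ (s : ℕ)) • LinearMap.proj s(r, s)

theorem sym2Eval_sym2Coeffs {P : R[X]} (hP : P.natDegree < d) (a b : R) :
    sym2Eval d a b (sym2Coeffs d P) = P.eval a * P.eval b := by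
  simp only [sym2Eval, sym2Coeffs, LinearMap.sum_apply, LinearMap.smul_apply,
    LinearMap.coe_proj, Function.eval, Sym2.lift_mk, smul_eq_mul]
  rw [eval_eq_sum_range' hP, eval_eq_sum_range' hP, sum_mul_sum, ← Fin.sum_univ_eq_sum_range]
  refine sum_congr rfl fun r _ => ?_
  rw [← Fin.sum_univ_eq_sum_range]
  refine sum_congr rfl fun s _ => ?_
  ring

end Sym2Forms

theorem eval_prod_X_sub_C_eq_zero_iff {α R : Type*} [CommRing R] [IsDomain R] {x : α → R}
    (hx : Function.Injective x) (B : Finset α) (a : α) :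
    (∏ r ∈ B, (X - C (x r))).eval (x a) = 0 ↔ a ∈ B := by
  simp [eval_prod, prod_eq_zero_iff, sub_eq_zero, hx.eq_iff]

/-- Frankl's skew Bollobás bound for pairs, by the polynomial method: with `P i` vanishing exactly
on `B i`, the coefficients of `P i (a) * P i (b)` form a triangular family with respect to evaluation
at `(p i, q i)`, and they live in the space of symmetric forms in the monomials `a ^ r * b ^ s`,
`r, s ≤ t`, of dimension `C(t+2, 2)`. -/
theorem card_le_choose_of_skew_pairs {α ι : Type*} [Countable α] [Fintype ι] [LinearOrder ι]
    {t : ℕ} (B : ι → Finset α) (p q : ι → α) (hB : ∀ i, (B i).card ≤ t)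
    (hp : ∀ i, p i ∉ B i) (hq : ∀ i, q i ∉ B i)
    (hskew : ∀ i j, i < j → p j ∈ B i ∨ q j ∈ B i) :
    Fintype.card ι ≤ (t + 2).choose 2 := by
  obtain ⟨f, hf⟩ := Countable.exists_injective_nat α
  set x : α → ℚ := fun a => f a
  have hx : Function.Injective x := Nat.cast_injective.comp hf
  set P : ι → ℚ[X] := fun i => ∏ r ∈ B i, (X - C (x r))
  have hdeg : ∀ i, (P i).natDegree < t + 1 := fun i => by
    simpa [P] using Nat.lt_succ_of_le (hB i)
  have hφv : ∀ i j, sym2Eval (t + 1) (x (p i)) (x (q i)) (sym2Coeffs (t + 1) (P j))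
      = (P j).eval (x (p i)) * (P j).eval (x (q i)) := fun i j =>
    sym2Eval_sym2Coeffs _ (hdeg j) _ _
  have hli : LinearIndependent ℚ fun i => sym2Coeffs (t + 1) (P i) := by
    refine linearIndependent_of_triangular _ (fun i => sym2Eval (t + 1) (x (p i)) (x (q i)))
      (fun i j hji => ?_) (fun i => ?_)
    · rw [hφv, mul_eq_zero, eval_prod_X_sub_C_eq_zero_iff hx, eval_prod_X_sub_C_eq_zero_iff hx]
      exact hskew j i hji
    · rw [hφv, mul_ne_zero_iff, Ne, Ne, eval_prod_X_sub_C_eq_zero_iff hx,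
        eval_prod_X_sub_C_eq_zero_iff hx]
      exact ⟨hp i, hq i⟩
  simpa [Sym2.card] using hli.fintype_card_le_finrank

section Compression

variable {Q A : Type*} [DecidableEq Q] (δ : Q → A → Q)

def Compresses (S : Finset Q) (w : List A) : Prop :=
  (S.image fun q => actW δ q w).card < S.card

theorem image_actW_append (S : Finset Q) (u v : List A) :
    S.image (fun q => actW δ q (u ++ v)) =
      (S.image fun q => actW δ q u).image fun q => actW δ q v := by
  rw [image_image]
  exact image_congr fun q _ => List.foldl_append ..

theorem card_image_actW_eq_of_not_compresses {S : Finset Q} {w : List A}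
    (hw : ¬ Compresses δ S w) : (S.image fun q => actW δ q w).card = S.card :=
  card_image_le.antisymm (not_lt.mp hw)

theorem compresses_of_mem_of_actW_eq {S : Finset Q} {w : List A} {a b : Q} (ha : a ∈ S)
    (hb : b ∈ S) (hab : a ≠ b) (h : actW δ a w = actW δ b w) : Compresses δ S w :=
  card_image_le.lt_of_ne fun hcard => hab (card_image_iff.mp hcard ha hb h)

theorem length_le_choose_of_minimal [Fintype Q] {S : Finset Q} {w : List A}
    (hw : Compresses δ S w) (hmin : ∀ v : List A, v.length < w.length → ¬ Compresses δ S v) :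
    w.length ≤ (Fintype.card Q - S.card + 2).choose 2 := by
  set T : Fin w.length → Finset Q := fun i => S.image fun q => actW δ q (w.take i)
  have hT : ∀ i, (T i).card = S.card := fun i =>
    card_image_actW_eq_of_not_compresses δ (hmin _ (by simp))
  have hTw : ∀ (i : Fin w.length) v, Compresses δ (T i) v ↔ Compresses δ S (w.take i ++ v) := by
    intro i v
    rw [Compresses, Compresses, hT, image_actW_append]
  have hpair : ∀ i : Fin w.length, ∃ p ∈ T i, ∃ q ∈ T i, p ≠ q ∧
      actW δ p (w.drop i) = actW δ q (w.drop i) := fun i =>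
    exists_ne_map_eq_of_card_image_lt ((hTw i _).mpr (by rwa [List.take_append_drop]))
  choose p hp q hq hpq hmerge using hpair
  have := card_le_choose_of_skew_pairs (fun i => (T i)ᶜ) p q
    (fun i => by rw [card_compl, hT]) (fun i => by simpa using hp i) (fun i => by simpa using hq i)
    (fun i j hij => ?_)
  · simpa using this
  by_contra! hin
  simp only [mem_compl, not_not] at hin
  refine hmin _ ?_ ((hTw i _).mp (compresses_of_mem_of_actW_eq δ hin.1 hin.2 (hpq j) (hmerge j)))
  have : (i : ℕ) < j := hij
  simp only [List.length_append, List.length_take, List.length_drop]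
  omega

theorem Compresses.of_card_img_eq_one [Fintype Q] {u : List A} (hu : (img δ u).card = 1)
    {S : Finset Q} (hS : 2 ≤ S.card) : Compresses δ S u :=
  calc (S.image fun q => actW δ q u).card
      ≤ (img δ u).card := card_le_card (image_subset_image (subset_univ S))
    _ < S.card := by omega

theorem exists_compresses_length_le_choose [Fintype Q]
    (hsync : ∃ u : List A, (img δ u).card = 1) {S : Finset Q} (hS : 2 ≤ S.card) :
    ∃ w : List A, w.length ≤ (Fintype.card Q - S.card + 2).choose 2 ∧ Compresses δ S w := by
  classical
  obtain ⟨u, hu⟩ := hsync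
  have hex : ∃ n, ∃ w : List A, w.length = n ∧ Compresses δ S w :=
    ⟨_, u, rfl, Compresses.of_card_img_eq_one δ hu hS⟩
  obtain ⟨w, hlen, hw⟩ := Nat.find_spec hex
  refine ⟨w, length_le_choose_of_minimal δ hw fun v hv hcv => ?_, hw⟩
  exact Nat.find_min hex (hlen ▸ hv) ⟨v, rfl, hcv⟩

theorem exists_card_image_eq_one_length_le_sum [Fintype Q]
    (hsync : ∃ u : List A, (img δ u).card = 1) {S : Finset Q} (hS : S.Nonempty) :
    ∃ v : List A, (S.image fun q => actW δ q v).card = 1 ∧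
      v.length ≤ ∑ m ∈ Icc 2 S.card, (Fintype.card Q - m + 2).choose 2 := by
  induction hn : S.card using Nat.strong_induction_on generalizing S with
  | _ n ih =>
  rcases Nat.lt_or_ge n 2 with hn2 | hn2
  · refine ⟨[], ?_, by simp⟩
    have := hS.card_pos
    simpa [actW] using show S.card = 1 by omega
  obtain ⟨w, hw_len, hw⟩ := exists_compresses_length_le_choose δ hsync (hn ▸ hn2)
  rw [Compresses, hn] at hw
  rw [hn] at hw_len
  obtain ⟨v, hv, hv_len⟩ := ih _ hw (hS.image _) rfl
  refine ⟨w ++ v, by rwa [image_actW_append], ?_⟩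
  have hsum : ∑ m ∈ Icc 2 (S.image fun q => actW δ q w).card, (Fintype.card Q - m + 2).choose 2
      ≤ ∑ m ∈ Icc 2 (n - 1), (Fintype.card Q - m + 2).choose 2 :=
    sum_le_sum_of_subset (Icc_subset_Icc_right (by omega))
  have hsplit := sum_Icc_succ_top (show 2 ≤ n - 1 + 1 by omega)
    fun m => (Fintype.card Q - m + 2).choose 2
  rw [Nat.sub_add_cancel (by omega : 1 ≤ n)] at hsplit
  rw [List.length_append, hsplit]
  omega

end Compression

theorem Nat.succ_choose_three (n : ℕ) : (n + 1).choose 3 = (n ^ 3 - n) / 6 := by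
  refine (Nat.div_eq_of_eq_mul_left (by norm_num) ?_).symm
  rw [mul_comm, show 6 = Nat.factorial 3 from rfl, ← Nat.descFactorial_eq_factorial_mul_choose]
  rcases n with _ | n
  · rfl
  · simp only [Nat.succ_descFactorial_succ, Nat.descFactorial_one]
    exact Nat.sub_eq_of_eq_add (by ring)

theorem sum_Icc_choose_reflect (n : ℕ) :
    ∑ m ∈ Icc 2 n, (n - m + 2).choose 2 = (n ^ 3 - n) / 6 := by
  have hreflect : ∑ m ∈ Icc 2 n, (n - m + 2).choose 2 = ∑ m ∈ Icc 2 n, m.choose 2 := by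
    refine sum_nbij' (fun m => n + 2 - m) (fun m => n + 2 - m) ?_ ?_ ?_ ?_ ?_ <;>
      intro m hm <;> simp only [mem_Icc] at hm ⊢
    all_goals first | omega | congr 1; omega
  rw [hreflect, Nat.sum_Icc_choose, Nat.succ_choose_three]

/-- Correctness of the greedy compressing algorithm: every subset of size ≥ 2
admits a compressing word of length ≤ C(n-|S|+2, 2); summing these bounds over
m = 2..n gives (n^3-n)/6, so the greedy algorithm yields a reset word of length
at most (n^3-n)/6. -/
theorem greedy_compressing_bound {Q A : Type*} [Fintype Q] [DecidableEq Q]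
    (δ : Q → A → Q) (hsync : ∃ w : List A, (img δ w).card = 1) :
    (∀ S : Finset Q, 2 ≤ S.card →
      ∃ w : List A, w.length ≤ Nat.choose (Fintype.card Q - S.card + 2) 2 ∧
        (S.image (fun q => actW δ q w)).card < S.card) ∧
    (∑ m ∈ Finset.Icc 2 (Fintype.card Q), Nat.choose (Fintype.card Q - m + 2) 2
      = (Fintype.card Q ^ 3 - Fintype.card Q) / 6) ∧
    (∃ w : List A, (img δ w).card = 1 ∧
      w.length ≤ (Fintype.card Q ^ 3 - Fintype.card Q) / 6) := by
  refine ⟨fun S hS => exists_compresses_length_le_choose δ hsync hS,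
    sum_Icc_choose_reflect _, ?_⟩
  have hQ : (univ : Finset Q).Nonempty := by
    obtain ⟨u, hu⟩ := hsync
    exact image_nonempty.mp (card_pos.mp (hu ▸ one_pos : 0 < (img δ u).card))
  obtain ⟨v, hv, hv_len⟩ := exists_card_image_eq_one_length_le_sum δ hsync hQ
  rw [card_univ, sum_Icc_choose_reflect] at hv_len
  exact ⟨v, hv, hv_len⟩
end
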